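/- For every polynomial P ∈ ℂ_p[[x]_q] (a polynomial in the variable [x]_q), the distribution μ_{P,q} is strongly p-adic q-invariant: there is a constant C > 0 such that |[p^n]_q μ_{P,q}(x+p^nℤ_p) − [p^{n+1}]_q μ_{P,q}(x+p^{n+1}ℤ_p)|_p ≤ C p^{-n} for all x ∈ ℤ_p and n ≥ 1. -/

import Mathlib

open Filter Finset Topology

variable {p : ℕ} [hp : Fact p.Prime] {K : Type*} [NontriviallyNormedField K]

/-- The `q`-analogue `[n]_q = (1 - q^n)/(1 - q)` of a natural number `n`. -/
noncomputable def qNum (q : K) (n : ℕ) : K := (1 - q ^ n) / (1 - q)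

/-- `f : ℤ_p → K` is a `C¹` (strictly differentiable) function: the difference quotient
`Δ₁f(m,x) = (f(x+m) - f(x))/m` extends to a continuous function of `(m, x)`. Here
`ι : ℤ_p →+* K` is the (isometric) embedding of `ℤ_p` into `K`. -/
def IsC1 (ι : PadicInt p →+* K) (f : PadicInt p → K) : Prop :=
  ∃ Df : PadicInt p × PadicInt p → K, Continuous Df ∧
    ∀ m x : PadicInt p, m ≠ 0 → Df (m, x) * ι m = f (x + m) - f x

/-- A `K`-valued distribution on `ℤ_p`: `μ x n` is the value on the ball `x + pⁿℤ_p`;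
it depends only on the ball and is finitely additive under splitting a ball of level `n`
into the `p` balls of level `n+1`. -/
def IsDist (μ : PadicInt p → ℕ → K) : Prop :=
  (∀ (x y : PadicInt p) (n : ℕ), ‖x - y‖ ≤ (p : ℝ) ^ (-(n : ℤ)) → μ x n = μ y n) ∧
  ∀ (x : PadicInt p) (n : ℕ),
    μ x n = ∑ i ∈ range p, μ (x + (i : PadicInt p) * (p : PadicInt p) ^ n) (n + 1)

lemma na_add_eq (hna : IsNonarchimedean (‖·‖ : K → ℝ)) {a b : K} (h : ‖b‖ < ‖a‖) :
    ‖a + b‖ = ‖a‖ := by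
  refine le_antisymm ((hna a b).trans (max_le le_rfl h.le)) ?_
  by_contra hlt
  push_neg at hlt
  have h2 := hna (a + b) (-b)
  simp only [add_neg_cancel_right, norm_neg] at h2
  rcases max_cases ‖a + b‖ ‖b‖ with ⟨he, _⟩ | ⟨he, _⟩ <;> rw [he] at h2 <;> linarith

lemma na_sum_le (hna : IsNonarchimedean (‖·‖ : K → ℝ)) {ι : Type*} {s : Finset ι} {f : ι → K}
    {B : ℝ} (hB : 0 ≤ B) (h : ∀ i ∈ s, ‖f i‖ ≤ B) : ‖∑ i ∈ s, f i‖ ≤ B := by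
  classical
  induction s using Finset.induction_on with
  | empty => simpa using hB
  | @insert a s ha ih =>
    rw [Finset.sum_insert ha]
    exact (hna _ _).trans (max_le (h a (Finset.mem_insert_self a s))
      (ih fun i hi => h i (Finset.mem_insert_of_mem hi)))

lemma na_natCast_le_one (hna : IsNonarchimedean (‖·‖ : K → ℝ)) (k : ℕ) : ‖(k : K)‖ ≤ 1 := by
  induction k with
  | zero => simp
  | succ n ih =>
    push_cast
    exact (hna (n : K) 1).trans (max_le ih (by simp))

lemma na_intCast_le_one (hna : IsNonarchimedean (‖·‖ : K → ℝ)) (z : ℤ) : ‖(z : K)‖ ≤ 1 := by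
  obtain ⟨k, rfl | rfl⟩ := z.eq_nat_or_neg
  · exact_mod_cast na_natCast_le_one hna k
  · push_cast
    rw [norm_neg]
    exact na_natCast_le_one hna k

lemma norm_eq_one_of_close (hna : IsNonarchimedean (‖·‖ : K → ℝ)) {w : K} (hw : ‖1 - w‖ < 1) :
    ‖w‖ = 1 := by
  have h : ‖(1 : K) + (w - 1)‖ = ‖(1 : K)‖ := by
    refine na_add_eq hna ?_
    simpa [norm_sub_rev] using hw
  simpa using h

lemma na_pow_sub_pow (hna : IsNonarchimedean (‖·‖ : K → ℝ)) {x y : K} (hx : ‖x‖ ≤ 1)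
    (hy : ‖y‖ ≤ 1) (n : ℕ) : ‖x ^ n - y ^ n‖ ≤ ‖x - y‖ := by
  rw [← geom_sum₂_mul x y n, norm_mul]
  have h1 : ‖∑ i ∈ range n, x ^ i * y ^ (n - 1 - i)‖ ≤ 1 := by
    refine na_sum_le hna zero_le_one fun i _ => ?_
    rw [norm_mul]
    have hxp : ‖x ^ i‖ ≤ 1 := by rw [norm_pow]; exact pow_le_one₀ (norm_nonneg x) hx
    have hyp : ‖y ^ (n - 1 - i)‖ ≤ 1 := by rw [norm_pow]; exact pow_le_one₀ (norm_nonneg y) hy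
    exact mul_le_one₀ hxp (norm_nonneg _) hyp
  calc ‖∑ i ∈ range n, x ^ i * y ^ (n - 1 - i)‖ * ‖x - y‖ ≤ 1 * ‖x - y‖ := by
        exact mul_le_mul_of_nonneg_right h1 (norm_nonneg _)
    _ = ‖x - y‖ := one_mul _

lemma na_norm_natCast_coprime (hna : IsNonarchimedean (‖·‖ : K → ℝ))
    (hpK : ‖(p : K)‖ = (p : ℝ)⁻¹) {r : ℕ} (hr : ¬ p ∣ r) : ‖(r : K)‖ = 1 := by
  refine le_antisymm (na_natCast_le_one hna r) ?_
  by_contra hlt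
  push_neg at hlt
  have hco : Nat.gcd r p = 1 := (Nat.Prime.coprime_iff_not_dvd hp.out).mpr hr |>.symm
  have hZ : (1 : ℤ) = r * Nat.gcdA r p + p * Nat.gcdB r p := by
    have := Nat.gcd_eq_gcd_ab r p
    rw [hco] at this
    exact_mod_cast this
  have hK : (1 : K) = (r : K) * ((Nat.gcdA r p : ℤ) : K) + (p : K) * ((Nat.gcdB r p : ℤ) : K) := by
    exact_mod_cast congrArg (fun z : ℤ => (z : K)) hZ
  have h1 : ‖(r : K) * ((Nat.gcdA r p : ℤ) : K)‖ < 1 := by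
    rw [norm_mul]
    calc ‖(r : K)‖ * ‖((Nat.gcdA r p : ℤ) : K)‖ ≤ ‖(r : K)‖ * 1 :=
          mul_le_mul_of_nonneg_left (na_intCast_le_one hna _) (norm_nonneg _)
      _ = ‖(r : K)‖ := mul_one _
      _ < 1 := hlt
  have h2 : ‖(p : K) * ((Nat.gcdB r p : ℤ) : K)‖ < 1 := by
    rw [norm_mul, hpK]
    have hp2 : (2 : ℝ) ≤ (p : ℝ) := by exact_mod_cast hp.out.two_le
    have hpinv : (p : ℝ)⁻¹ < 1 := by
      rw [inv_lt_one_iff₀]; right; linarith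
    calc (p : ℝ)⁻¹ * ‖((Nat.gcdB r p : ℤ) : K)‖ ≤ (p : ℝ)⁻¹ * 1 :=
          mul_le_mul_of_nonneg_left (na_intCast_le_one hna _) (by positivity)
      _ = (p : ℝ)⁻¹ := mul_one _
      _ < 1 := hpinv
  have hfin : (1 : ℝ) ≤ max ‖(r : K) * ((Nat.gcdA r p : ℤ) : K)‖
      ‖(p : K) * ((Nat.gcdB r p : ℤ) : K)‖ := by
    calc (1 : ℝ) = ‖(1 : K)‖ := norm_one.symm
      _ ≤ _ := by rw [hK]; exact hna _ _
  rcases max_lt h1 h2 with h3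
  linarith [hfin.trans_lt h3]


lemma thr_lt_one : (p : ℝ) ^ (-1 / ((p : ℝ) - 1)) < 1 := by
  have hp2 : (2 : ℝ) ≤ (p : ℝ) := by exact_mod_cast hp.out.two_le
  refine Real.rpow_lt_one_of_one_lt_of_neg (by linarith) ?_
  rw [neg_div]
  have h0 : 0 < 1 / ((p : ℝ) - 1) := by
    have : 0 < (p : ℝ) - 1 := by linarith
    positivity
  linarith

lemma thr_pow_eq : ((p : ℝ) ^ (-1 / ((p : ℝ) - 1))) ^ (p - 1) = (p : ℝ)⁻¹ := by
  have hp2 : (2 : ℝ) ≤ (p : ℝ) := by exact_mod_cast hp.out.two_le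
  have hppos : (0 : ℝ) < (p : ℝ) := by linarith
  have hne : (p : ℝ) - 1 ≠ 0 := by linarith
  have hcast : ((p - 1 : ℕ) : ℝ) = (p : ℝ) - 1 := by
    have := hp.out.two_le
    push_cast [Nat.cast_sub (by omega : 1 ≤ p)]
    ring
  rw [← Real.rpow_natCast ((p : ℝ) ^ (-1 / ((p : ℝ) - 1))) (p - 1), ← Real.rpow_mul hppos.le,
    hcast]
  rw [div_mul_cancel₀ _ hne, Real.rpow_neg_one]

lemma pow_expand (w : K) : w ^ p - 1 - p * (w - 1) =
    ∑ k ∈ Finset.Ico 2 (p + 1), (w - 1) ^ k * (p.choose k : K) := by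
  have h := add_pow (w - 1) 1 p
  simp only [one_pow, mul_one, sub_add_cancel] at h
  have hsplit : (∑ k ∈ range 2, (w - 1) ^ k * (p.choose k : K)) +
      (∑ k ∈ Finset.Ico 2 (p + 1), (w - 1) ^ k * (p.choose k : K)) =
      ∑ k ∈ range (p + 1), (w - 1) ^ k * (p.choose k : K) :=
    Finset.sum_range_add_sum_Ico _ (by have := hp.out.two_le; omega)
  have h2 : (∑ k ∈ range 2, (w - 1) ^ k * (p.choose k : K)) = 1 + (w - 1) * p := by
    simp [Finset.sum_range_succ, Nat.choose_one_right]
  rw [h2] at hsplit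
  rw [h] at *
  linear_combination -hsplit

lemma na_step (hna : IsNonarchimedean (‖·‖ : K → ℝ)) (hpK : ‖(p : K)‖ = (p : ℝ)⁻¹) {w : K}
    (hw : ‖1 - w‖ < (p : ℝ) ^ (-1 / ((p : ℝ) - 1))) :
    ‖1 - w ^ p‖ = (p : ℝ)⁻¹ * ‖1 - w‖ := by
  rcases eq_or_ne w 1 with rfl | hw1
  · simp
  have hppos : (0 : ℝ) < (p : ℝ)⁻¹ := by
    have : (0:ℝ) < (p:ℝ) := by exact_mod_cast hp.out.pos
    positivity
  have hη : ‖w - 1‖ = ‖1 - w‖ := norm_sub_rev _ _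
  have hηpos : 0 < ‖w - 1‖ := by
    rw [norm_pos_iff]; exact sub_ne_zero.mpr hw1
  have hηlt1 : ‖w - 1‖ < 1 := by rw [hη]; exact hw.trans thr_lt_one
  set δ : ℝ := max ‖w - 1‖ ((p : ℝ) * ‖w - 1‖ ^ (p - 1)) with hδ
  have hδ1 : δ < 1 := by
    refine max_lt hηlt1 ?_
    have h1 : ‖w - 1‖ ^ (p - 1) < ((p : ℝ) ^ (-1 / ((p : ℝ) - 1))) ^ (p - 1) := by
      refine pow_lt_pow_left₀ (by rw [hη]; exact hw) (norm_nonneg _) (by have := hp.out.two_le; omega)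
    rw [thr_pow_eq] at h1
    have hppos' : (0:ℝ) < (p:ℝ) := by exact_mod_cast hp.out.pos
    calc (p : ℝ) * ‖w - 1‖ ^ (p - 1) < (p : ℝ) * (p : ℝ)⁻¹ := by
          exact mul_lt_mul_of_pos_left h1 hppos'
      _ = 1 := mul_inv_cancel₀ hppos'.ne'
  have hδ0 : 0 ≤ δ := le_max_of_le_left (norm_nonneg _)
  -- bound the tail sum
  have hS : ‖∑ k ∈ Finset.Ico 2 (p + 1), (w - 1) ^ k * (p.choose k : K)‖ ≤
      (p : ℝ)⁻¹ * ‖w - 1‖ * δ := by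
    refine na_sum_le hna (by positivity) fun k hk => ?_
    rw [Finset.mem_Ico] at hk
    rw [norm_mul, norm_pow]
    rcases lt_or_ge k p with hkp | hkp
    · -- k < p : p ∣ choose
      obtain ⟨t, ht⟩ := hp.out.dvd_choose_self (by omega) hkp
      have hc : ‖(p.choose k : K)‖ ≤ (p : ℝ)⁻¹ := by
        rw [ht]
        push_cast
        rw [norm_mul, hpK]
        calc (p : ℝ)⁻¹ * ‖(t : K)‖ ≤ (p : ℝ)⁻¹ * 1 :=
              mul_le_mul_of_nonneg_left (na_natCast_le_one hna t) hppos.le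
          _ = (p : ℝ)⁻¹ := mul_one _
      calc ‖w - 1‖ ^ k * ‖(p.choose k : K)‖ ≤ ‖w - 1‖ ^ 2 * (p : ℝ)⁻¹ := by
            refine mul_le_mul (pow_le_pow_of_le_one (norm_nonneg _) hηlt1.le (by omega)) hc
              (norm_nonneg _) (by positivity)
        _ = (p : ℝ)⁻¹ * ‖w - 1‖ * ‖w - 1‖ := by ring
        _ ≤ (p : ℝ)⁻¹ * ‖w - 1‖ * δ := by
            refine mul_le_mul_of_nonneg_left (le_max_left _ _) (by positivity)
    · -- k = p (since k ≤ p)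
      have hkeq : k = p := by omega
      rw [hkeq]
      simp only [Nat.choose_self, Nat.cast_one, norm_one, mul_one]
      have hppos' : (0:ℝ) < (p:ℝ) := by exact_mod_cast hp.out.pos
      have h2 : ‖w - 1‖ * ‖w - 1‖ ^ (p - 1) = ‖w - 1‖ ^ p := by
        rw [← pow_succ']
        congr 1
        have := hp.out.two_le; omega
      have heq : ‖w - 1‖ ^ p = (p : ℝ)⁻¹ * ‖w - 1‖ * ((p : ℝ) * ‖w - 1‖ ^ (p - 1)) := by
        calc ‖w - 1‖ ^ p = ((p:ℝ)⁻¹ * (p:ℝ)) * (‖w - 1‖ * ‖w - 1‖ ^ (p - 1)) := by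
              rw [inv_mul_cancel₀ hppos'.ne', one_mul, h2]
          _ = (p : ℝ)⁻¹ * ‖w - 1‖ * ((p : ℝ) * ‖w - 1‖ ^ (p - 1)) := by ring
      rw [heq]
      exact mul_le_mul_of_nonneg_left (le_max_right _ _) (by positivity)
  have hSlt : ‖∑ k ∈ Finset.Ico 2 (p + 1), (w - 1) ^ k * (p.choose k : K)‖ < (p : ℝ)⁻¹ * ‖w - 1‖ :=
    hS.trans_lt (by
      calc (p : ℝ)⁻¹ * ‖w - 1‖ * δ < (p : ℝ)⁻¹ * ‖w - 1‖ * 1 := by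
            exact mul_lt_mul_of_pos_left hδ1 (by positivity)
        _ = (p : ℝ)⁻¹ * ‖w - 1‖ := mul_one _)
  have hkey : 1 - w ^ p = (-(((p : ℕ) : K) * (w - 1))) +
      (-(∑ k ∈ Finset.Ico 2 (p + 1), (w - 1) ^ k * (p.choose k : K))) := by
    linear_combination -pow_expand (p := p) w
  rw [hkey, na_add_eq hna (by simpa [norm_neg, norm_mul, hpK] using hSlt), norm_neg,
    norm_mul, hpK, hη]

variable {q : K}

/-- norm of `1 - q^(p^M)` -/
lemma norm_one_sub_q_ppow (hna : IsNonarchimedean (‖·‖ : K → ℝ))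
    (hpK : ‖(p : K)‖ = (p : ℝ)⁻¹) (hq : ‖1 - q‖ < (p : ℝ) ^ (-1 / ((p : ℝ) - 1))) (M : ℕ) :
    ‖1 - q ^ p ^ M‖ = ((p : ℝ) ^ M)⁻¹ * ‖1 - q‖ := by
  induction M with
  | zero => simp
  | succ M ih =>
    have hlt : ‖1 - q ^ p ^ M‖ < (p : ℝ) ^ (-1 / ((p : ℝ) - 1)) := by
      rw [ih]
      have h1 : ((p : ℝ) ^ M)⁻¹ ≤ 1 := by
        rw [inv_le_one_iff₀]
        right
        exact one_le_pow₀ (by exact_mod_cast hp.out.one_le)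
      calc ((p : ℝ) ^ M)⁻¹ * ‖1 - q‖ ≤ 1 * ‖1 - q‖ :=
            mul_le_mul_of_nonneg_right h1 (norm_nonneg _)
        _ = ‖1 - q‖ := one_mul _
        _ < _ := hq
    have hstep := na_step hna hpK hlt
    rw [← pow_mul, ← pow_succ] at hstep
    rw [hstep, ih, pow_succ]
    field_simp

lemma norm_natCast_eq_factorization (hna : IsNonarchimedean (‖·‖ : K → ℝ))
    (hpK : ‖(p : K)‖ = (p : ℝ)⁻¹) {l : ℕ} (hl : l ≠ 0) :
    ‖(l : K)‖ = ((p : ℝ) ^ (l.factorization p))⁻¹ := by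
  have hfac := Nat.ordProj_mul_ordCompl_eq_self l p
  have hnd : ¬ p ∣ (l / p ^ l.factorization p) := Nat.not_dvd_ordCompl hp.out hl
  calc ‖(l : K)‖ = ‖((p ^ l.factorization p * (l / p ^ l.factorization p) : ℕ) : K)‖ := by
        rw [hfac]
    _ = ‖(p : K)‖ ^ (l.factorization p) * ‖((l / p ^ l.factorization p : ℕ) : K)‖ := by
        push_cast
        rw [norm_mul, norm_pow]
    _ = ((p : ℝ) ^ (l.factorization p))⁻¹ := by
        rw [hpK, na_norm_natCast_coprime hna hpK hnd, mul_one, inv_pow]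

/-- norm of `1 - q^(p^M * l)` for `l ≠ 0`. -/
lemma norm_one_sub_q_pow_mul (hna : IsNonarchimedean (‖·‖ : K → ℝ))
    (hpK : ‖(p : K)‖ = (p : ℝ)⁻¹) (hq : ‖1 - q‖ < (p : ℝ) ^ (-1 / ((p : ℝ) - 1)))
    (M : ℕ) {l : ℕ} (hl : l ≠ 0) :
    ‖1 - q ^ (p ^ M * l)‖ =
      ((p : ℝ) ^ (l.factorization p))⁻¹ * (((p : ℝ) ^ M)⁻¹ * ‖1 - q‖) := by
  set s := l.factorization p with hs
  set r := l / p ^ s with hr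
  have hfac : p ^ s * r = l := Nat.ordProj_mul_ordCompl_eq_self l p
  have hnd : ¬ p ∣ r := Nat.not_dvd_ordCompl hp.out hl
  set W := q ^ (p ^ (M + s)) with hW
  have hWnorm : ‖1 - W‖ = ((p : ℝ) ^ (M + s))⁻¹ * ‖1 - q‖ := norm_one_sub_q_ppow hna hpK hq _
  have hWle1 : ‖1 - W‖ < 1 := by
    rw [hWnorm]
    have h1 : ((p : ℝ) ^ (M + s))⁻¹ ≤ 1 := by
      rw [inv_le_one_iff₀]; right
      exact one_le_pow₀ (by exact_mod_cast hp.out.one_le)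
    have h2 : ‖1 - q‖ < 1 := hq.trans thr_lt_one
    calc ((p : ℝ) ^ (M + s))⁻¹ * ‖1 - q‖ ≤ 1 * ‖1 - q‖ :=
          mul_le_mul_of_nonneg_right h1 (norm_nonneg _)
      _ < 1 := by rwa [one_mul]
  have hWn1 : ‖W‖ = 1 := norm_eq_one_of_close hna hWle1
  have hqpow : q ^ (p ^ M * l) = W ^ r := by
    have he : p ^ M * l = p ^ (M + s) * r := by rw [← hfac, pow_add]; ring
    rw [hW, ← pow_mul, he]
  have hgeom : 1 - W ^ r = (∑ i ∈ range r, W ^ i) * (1 - W) := by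
    have := geom_sum_mul W r
    linear_combination this
  have hsum : ‖∑ i ∈ range r, W ^ i‖ = 1 := by
    have hsplit : ∑ i ∈ range r, W ^ i = (r : K) + ∑ i ∈ range r, (W ^ i - 1) := by
      rw [Finset.sum_sub_distrib]
      simp [Finset.sum_const, Finset.card_range]
    rw [hsplit, na_add_eq hna, na_norm_natCast_coprime hna hpK hnd]
    rw [na_norm_natCast_coprime hna hpK hnd]
    refine lt_of_le_of_lt (na_sum_le hna (norm_nonneg (1 - W)) fun i _ => ?_) hWle1
    calc ‖W ^ i - 1‖ = ‖W ^ i - 1 ^ i‖ := by rw [one_pow]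
      _ ≤ ‖W - 1‖ := na_pow_sub_pow hna hWn1.le (by simp) i
      _ = ‖1 - W‖ := norm_sub_rev _ _
  rw [hqpow, hgeom, norm_mul, hsum, one_mul, hWnorm, pow_add]
  field_simp

lemma norm_qNum_ppow (hna : IsNonarchimedean (‖·‖ : K → ℝ)) (hpK : ‖(p : K)‖ = (p : ℝ)⁻¹)
    (hq : ‖1 - q‖ < (p : ℝ) ^ (-1 / ((p : ℝ) - 1))) (hq1 : q ≠ 1) (M : ℕ) :
    ‖qNum q (p ^ M)‖ = ((p : ℝ) ^ M)⁻¹ := by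
  have hεpos : 0 < ‖1 - q‖ := norm_pos_iff.mpr (sub_ne_zero.mpr (Ne.symm hq1))
  unfold qNum
  rw [norm_div, norm_one_sub_q_ppow hna hpK hq M, mul_div_assoc, div_self hεpos.ne', mul_one]

lemma tail_bound (hna : IsNonarchimedean (‖·‖ : K → ℝ)) {w : K} (hw : ‖w - 1‖ ≤ 1) :
    ‖w ^ p - 1 - (p : K) * (w - 1)‖ ≤ ‖w - 1‖ ^ 2 := by
  rw [pow_expand]
  refine na_sum_le hna (by positivity) fun k hk => ?_
  rw [Finset.mem_Ico] at hk
  rw [norm_mul, norm_pow]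
  calc ‖w - 1‖ ^ k * ‖((p.choose k : ℕ) : K)‖ ≤ ‖w - 1‖ ^ 2 * 1 := by
        refine mul_le_mul (pow_le_pow_of_le_one (norm_nonneg _) hw hk.1) ?_ (norm_nonneg _)
          (by positivity)
        exact na_natCast_le_one hna _
    _ = ‖w - 1‖ ^ 2 := mul_one _

lemma qNum_pow_expand (q : K) (a e i j : ℕ) :
    qNum q (a + i * e) ^ j = ((1 - q)⁻¹) ^ j *
      ∑ l ∈ range (j + 1), ((-(q ^ a)) ^ l * ((j.choose l : ℕ) : K) * (q ^ (e * l)) ^ i) := by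
  have hz : q ^ (a + i * e) = q ^ a * (q ^ e) ^ i := by rw [pow_add, mul_comm i e, pow_mul]
  have hb := add_pow (-(q ^ a * (q ^ e) ^ i)) 1 j
  simp only [one_pow, mul_one] at hb
  unfold qNum
  rw [hz, div_pow, div_eq_mul_inv, ← inv_pow]
  rw [show (1 : K) - q ^ a * (q ^ e) ^ i = -(q ^ a * (q ^ e) ^ i) + 1 by ring, hb]
  rw [mul_comm]
  congr 1
  refine Finset.sum_congr rfl fun l _ => ?_
  have h1 : (-(q ^ a * (q ^ e) ^ i)) ^ l = (-(q ^ a)) ^ l * ((q ^ e) ^ i) ^ l := by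
    rw [← neg_mul, mul_pow]
  rw [h1]
  have h2 : ((q ^ e) ^ i) ^ l = (q ^ (e * l)) ^ i := by
    rw [← pow_mul, ← pow_mul, ← pow_mul]
    congr 1
    ring
  rw [h2]
  ring

lemma Bform {F : Type*} [Field F] (oq Q R x1 x2 x3 GQ GR : F)
    (hq0 : oq ≠ 0) (h1 : x1 - 1 ≠ 0) (h2 : x2 - 1 ≠ 0)
    (e1 : GQ * (Q - 1) = x1 - 1) (e2 : GR * (R - 1) = x2 - 1) :
    (1 - Q)/oq * ((x3 - 1)/(x1 - 1)) - (1 - R)/oq * ((x3 - 1)/(x2 - 1))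
    = (x3 - 1) * ((1 - Q) * (1 - R) * (GQ - GR)) * (oq⁻¹ * (x1 - 1)⁻¹ * (x2 - 1)⁻¹) := by
  have i1 : (x1 - 1) * (x1 - 1)⁻¹ = 1 := mul_inv_cancel₀ h1
  have i2 : (x2 - 1) * (x2 - 1)⁻¹ = 1 := mul_inv_cancel₀ h2
  linear_combination (-((x3 - 1) * oq⁻¹ * (x1 - 1)⁻¹ * (x2 - 1)⁻¹)) * ((1 - Q) * e2 - (1 - R) * e1)
    - (x3 - 1) * oq⁻¹ * (1 - Q) * (x1 - 1)⁻¹ * i2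
    + (x3 - 1) * oq⁻¹ * (1 - R) * (x2 - 1)⁻¹ * i1


set_option maxHeartbeats 1600000 in
/-- for any polynomial `P ∈ K[[x]_q]` (coefficients `c`, degree `< d`),
`μ_{P,q}` is a strongly p-adic q-invariant distribution. -/
theorem mu_Pq_strongly_invariant
(q : K) (hna : IsNonarchimedean (‖·‖ : K → ℝ)) (hpK : ‖(p : K)‖ = (p : ℝ)⁻¹)
    (hq : ‖1 - q‖ < (p : ℝ) ^ (-1 / ((p : ℝ) - 1))) (hq1 : q ≠ 1)
    (d : ℕ) (c : ℕ → K) (μP : PadicInt p → ℕ → K)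
    (hμP : ∀ (x : PadicInt p) (n : ℕ) (a : ℕ), ‖x - (a : PadicInt p)‖ ≤ (p : ℝ) ^ (-(n : ℤ)) →
      Tendsto (fun m => (qNum q (p ^ (m + n)))⁻¹ *
        ∑ i ∈ range (p ^ m), ∑ j ∈ range d, c j * (qNum q (a + i * p ^ n)) ^ j)
        atTop (𝓝 (μP x n))) :
    ∃ C : ℝ, 0 < C ∧ ∀ (x : PadicInt p) (n : ℕ), 1 ≤ n →
      ‖qNum q (p ^ n) * μP x n - qNum q (p ^ (n + 1)) * μP x (n + 1)‖ ≤
        C * (p : ℝ) ^ (-(n : ℤ)) := by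
  have hppos : (0 : ℝ) < (p : ℝ) := by exact_mod_cast hp.out.pos
  have hsub : (1 : K) - q ≠ 0 := sub_ne_zero.mpr (Ne.symm hq1)
  have hεpos : (0 : ℝ) < ‖1 - q‖ := norm_pos_iff.mpr hsub
  have hεlt1 : ‖1 - q‖ < 1 := hq.trans thr_lt_one
  have hqn1 : ‖q‖ = 1 := norm_eq_one_of_close hna hεlt1
  have hκnn : (0:ℝ) ≤ ∑ l ∈ range d, (‖((l : ℕ) : K)‖)⁻¹ :=
    Finset.sum_nonneg fun l _ => by positivity
  have hγnn : (0:ℝ) ≤ ∑ j ∈ range d, ‖c j‖ * (‖1 - q‖⁻¹) ^ j :=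
    Finset.sum_nonneg fun j _ => by positivity
  refine ⟨(∑ j ∈ range d, ‖c j‖ * (‖1 - q‖⁻¹) ^ j) * ‖1 - q‖ *
      ((p : ℝ) + ∑ l ∈ range d, (‖((l : ℕ) : K)‖)⁻¹) + 1, by positivity, fun x n hn => ?_⟩
  have ha1 : ‖x - ((x.appr (n+1) : ℕ) : PadicInt p)‖ ≤ (p : ℝ) ^ (-((n + 1 : ℕ) : ℤ)) :=
    (PadicInt.norm_le_pow_iff_mem_span_pow _ _).mpr (PadicInt.appr_spec (n+1) x)
  have ha0 : ‖x - ((x.appr (n+1) : ℕ) : PadicInt p)‖ ≤ (p : ℝ) ^ (-(n : ℤ)) := by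
    refine ha1.trans ?_
    apply zpow_le_zpow_right₀ (by exact_mod_cast hp.out.one_le)
    push_cast; omega
  set a : ℕ := x.appr (n+1) with hadef
  have h1 := (hμP x n a ha0).comp (tendsto_add_atTop_nat 1)
  have h2 := hμP x (n + 1) a ha1
  have hD : Tendsto (fun m : ℕ =>
      qNum q (p ^ n) * ((qNum q (p ^ (m + 1 + n)))⁻¹ *
        ∑ i ∈ range (p ^ (m + 1)), ∑ j ∈ range d, c j * (qNum q (a + i * p ^ n)) ^ j)
      - qNum q (p ^ (n + 1)) * ((qNum q (p ^ (m + (n + 1))))⁻¹ *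
        ∑ i ∈ range (p ^ m), ∑ j ∈ range d, c j * (qNum q (a + i * p ^ (n + 1))) ^ j))
      atTop (𝓝 (qNum q (p ^ n) * μP x n - qNum q (p ^ (n + 1)) * μP x (n + 1))) :=
    (h1.const_mul _).sub (h2.const_mul _)
  have key : ∀ m : ℕ, ‖qNum q (p ^ n) * ((qNum q (p ^ (m + 1 + n)))⁻¹ *
        ∑ i ∈ range (p ^ (m + 1)), ∑ j ∈ range d, c j * (qNum q (a + i * p ^ n)) ^ j)
      - qNum q (p ^ (n + 1)) * ((qNum q (p ^ (m + (n + 1))))⁻¹ *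
        ∑ i ∈ range (p ^ m), ∑ j ∈ range d, c j * (qNum q (a + i * p ^ (n + 1))) ^ j)‖ ≤
      (∑ j ∈ range d, ‖c j‖ * (‖1 - q‖⁻¹) ^ j) * ‖1 - q‖ *
        ((p : ℝ) + ∑ l ∈ range d, (‖((l : ℕ) : K)‖)⁻¹) * ((p : ℝ) ^ n)⁻¹ := by
    intro m
    rw [show m + 1 + n = m + n + 1 from by omega, show m + (n + 1) = m + n + 1 from by omega]
    have hfact : ∀ u v e s t : K, u * (e * s) - v * (e * t) = e * (u * s - v * t) := by
      intros; ring
    rw [hfact, norm_mul, norm_inv, norm_qNum_ppow hna hpK hq hq1 (m + n + 1), inv_inv]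
    have hpninv : ((p : ℝ) ^ n)⁻¹ ≤ 1 := by
      rw [inv_le_one_iff₀]; right; exact one_le_pow₀ (by exact_mod_cast hp.out.one_le)
    -- the per-l building-block bound
    have hBl : ∀ l, l < d →
        ‖qNum q (p ^ n) * (∑ i ∈ range (p ^ (m + 1)), (q ^ (p ^ n * l)) ^ i)
          - qNum q (p ^ (n + 1)) * (∑ i ∈ range (p ^ m), (q ^ (p ^ (n + 1) * l)) ^ i)‖ ≤
        ((p : ℝ) ^ (m + n + 1))⁻¹ * (((p : ℝ) ^ n)⁻¹ * ‖1 - q‖) *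
          ((p : ℝ) + ∑ l' ∈ range d, (‖((l' : ℕ) : K)‖)⁻¹) := by
      intro l hld
      rcases Nat.eq_zero_or_pos l with rfl | hl
      · -- l = 0 : both geometric sums are just counts
        have hG1 : (∑ i ∈ range (p ^ (m + 1)), (q ^ (p ^ n * 0)) ^ i) = ((p : K) ^ (m + 1)) := by
          simp [Finset.sum_const, Finset.card_range]
        have hG2 : (∑ i ∈ range (p ^ m), (q ^ (p ^ (n + 1) * 0)) ^ i) = ((p : K) ^ m) := by
          simp [Finset.sum_const, Finset.card_range]
        rw [hG1, hG2]
        have hform : qNum q (p ^ n) * (p : K) ^ (m + 1) - qNum q (p ^ (n + 1)) * (p : K) ^ m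
            = ((p : K) ^ m * (1 - q)⁻¹) *
              ((q ^ (p ^ n)) ^ p - 1 - (p : K) * (q ^ (p ^ n) - 1)) := by
          unfold qNum
          rw [show q ^ (p ^ (n + 1)) = (q ^ (p ^ n)) ^ p from by rw [← pow_mul, pow_succ]]
          field_simp
          ring
        rw [hform]
        simp only [norm_mul, norm_inv, norm_pow, hpK]
        have hQ1 : ‖q ^ (p ^ n) - 1‖ = ((p : ℝ) ^ n)⁻¹ * ‖1 - q‖ := by
          rw [norm_sub_rev]; exact norm_one_sub_q_ppow hna hpK hq n
        have htail : ‖(q ^ (p ^ n)) ^ p - 1 - (p : K) * (q ^ (p ^ n) - 1)‖ ≤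
            (((p : ℝ) ^ n)⁻¹ * ‖1 - q‖) ^ 2 := by
          have hb := tail_bound (p := p) hna (w := q ^ (p ^ n)) (by
            rw [hQ1]
            calc ((p : ℝ) ^ n)⁻¹ * ‖1 - q‖ ≤ 1 * 1 :=
                  mul_le_mul hpninv hεlt1.le (norm_nonneg _) zero_le_one
              _ = 1 := one_mul _)
          rwa [hQ1] at hb
        calc ((p : ℝ))⁻¹ ^ m * ‖1 - q‖⁻¹ * ‖(q ^ (p ^ n)) ^ p - 1 - (p : K) * (q ^ (p ^ n) - 1)‖
            ≤ ((p : ℝ))⁻¹ ^ m * ‖1 - q‖⁻¹ * (((p : ℝ) ^ n)⁻¹ * ‖1 - q‖) ^ 2 := by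
              gcongr
          _ = ((p : ℝ) ^ (m + n + 1))⁻¹ * (((p : ℝ) ^ n)⁻¹ * ‖1 - q‖) * (p : ℝ) := by
              rw [pow_add, pow_add, pow_one, inv_pow]
              field_simp
          _ ≤ ((p : ℝ) ^ (m + n + 1))⁻¹ * (((p : ℝ) ^ n)⁻¹ * ‖1 - q‖) *
              ((p : ℝ) + ∑ l' ∈ range d, (‖((l' : ℕ) : K)‖)⁻¹) := by
              have hnn : (0:ℝ) ≤ ((p : ℝ) ^ (m + n + 1))⁻¹ * (((p : ℝ) ^ n)⁻¹ * ‖1 - q‖) := by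
                positivity
              nlinarith [hκnn]
      · -- 1 ≤ l
        have hlne : l ≠ 0 := hl.ne'
        have hx1n := norm_one_sub_q_pow_mul (q := q) hna hpK hq n hlne
        have hx2n := norm_one_sub_q_pow_mul (q := q) hna hpK hq (n + 1) hlne
        have hx3n := norm_one_sub_q_pow_mul (q := q) hna hpK hq (m + n + 1) hlne
        have hx1ne : q ^ (p ^ n * l) ≠ 1 := by
          intro h
          have hpos : 0 < ‖1 - q ^ (p ^ n * l)‖ := by rw [hx1n]; positivity
          rw [h] at hpos; simp at hpos
        have hx2ne : q ^ (p ^ (n + 1) * l) ≠ 1 := by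
          intro h
          have hpos : 0 < ‖1 - q ^ (p ^ (n + 1) * l)‖ := by rw [hx2n]; positivity
          rw [h] at hpos; simp at hpos
        have hG1 : ∑ i ∈ range (p ^ (m + 1)), (q ^ (p ^ n * l)) ^ i =
            (q ^ (p ^ (m + n + 1) * l) - 1) / (q ^ (p ^ n * l) - 1) := by
          rw [geom_sum_eq hx1ne, ← pow_mul,
            show p ^ n * l * p ^ (m + 1) = p ^ (m + n + 1) * l from by
              rw [show m + n + 1 = n + (m + 1) from by omega, pow_add]; ring]
        have hG2 : ∑ i ∈ range (p ^ m), (q ^ (p ^ (n + 1) * l)) ^ i =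
            (q ^ (p ^ (m + n + 1) * l) - 1) / (q ^ (p ^ (n + 1) * l) - 1) := by
          rw [geom_sum_eq hx2ne, ← pow_mul,
            show p ^ (n + 1) * l * p ^ m = p ^ (m + n + 1) * l from by
              rw [show m + n + 1 = (n + 1) + m from by omega, pow_add]; ring]
        rw [hG1, hG2]
        have e1 : (∑ k ∈ range l, (q ^ (p ^ n)) ^ k) * (q ^ (p ^ n) - 1) =
            q ^ (p ^ n * l) - 1 := by rw [geom_sum_mul, ← pow_mul]
        have e2 : (∑ k ∈ range l, (q ^ (p ^ (n + 1))) ^ k) * (q ^ (p ^ (n + 1)) - 1) =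
            q ^ (p ^ (n + 1) * l) - 1 := by rw [geom_sum_mul, ← pow_mul]
        have hx1s : q ^ (p ^ n * l) - 1 ≠ 0 := sub_ne_zero.mpr hx1ne
        have hx2s : q ^ (p ^ (n + 1) * l) - 1 ≠ 0 := sub_ne_zero.mpr hx2ne
        rw [show qNum q (p ^ n) = (1 - q ^ (p ^ n)) / (1 - q) from rfl,
          show qNum q (p ^ (n + 1)) = (1 - q ^ (p ^ (n + 1))) / (1 - q) from rfl,
          Bform (1 - q) (q ^ (p ^ n)) (q ^ (p ^ (n + 1))) (q ^ (p ^ n * l))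
            (q ^ (p ^ (n + 1) * l)) (q ^ (p ^ (m + n + 1) * l)) _ _ hsub hx1s hx2s e1 e2]
        -- compute all the norms
        have v1 : ‖q ^ (p ^ n * l) - 1‖ =
            ((p : ℝ) ^ (l.factorization p))⁻¹ * (((p : ℝ) ^ n)⁻¹ * ‖1 - q‖) := by
          rw [norm_sub_rev]; exact hx1n
        have v2 : ‖q ^ (p ^ (n + 1) * l) - 1‖ =
            ((p : ℝ) ^ (l.factorization p))⁻¹ * (((p : ℝ) ^ (n + 1))⁻¹ * ‖1 - q‖) := by
          rw [norm_sub_rev]; exact hx2n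
        have v3 : ‖q ^ (p ^ (m + n + 1) * l) - 1‖ =
            ((p : ℝ) ^ (l.factorization p))⁻¹ * (((p : ℝ) ^ (m + n + 1))⁻¹ * ‖1 - q‖) := by
          rw [norm_sub_rev]; exact hx3n
        have vQ : ‖(1 : K) - q ^ (p ^ n)‖ = ((p : ℝ) ^ n)⁻¹ * ‖1 - q‖ :=
          norm_one_sub_q_ppow hna hpK hq n
        have vR : ‖(1 : K) - q ^ (p ^ (n + 1))‖ = ((p : ℝ) ^ (n + 1))⁻¹ * ‖1 - q‖ :=
          norm_one_sub_q_ppow hna hpK hq (n + 1)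
        have hsub12 : ‖(∑ k ∈ range l, (q ^ (p ^ n)) ^ k) -
            (∑ k ∈ range l, (q ^ (p ^ (n + 1))) ^ k)‖ ≤ ((p : ℝ) ^ n)⁻¹ * ‖1 - q‖ := by
          rw [← Finset.sum_sub_distrib]
          refine na_sum_le hna (by positivity) fun k _ => ?_
          have hQn : ‖q ^ (p ^ n)‖ = 1 := by rw [norm_pow, hqn1, one_pow]
          have hRn : ‖q ^ (p ^ (n + 1))‖ = 1 := by rw [norm_pow, hqn1, one_pow]
          calc ‖(q ^ (p ^ n)) ^ k - (q ^ (p ^ (n + 1))) ^ k‖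
              ≤ ‖q ^ (p ^ n) - q ^ (p ^ (n + 1))‖ := na_pow_sub_pow hna hQn.le hRn.le k
            _ ≤ ((p : ℝ) ^ n)⁻¹ * ‖1 - q‖ := by
                have hid : q ^ (p ^ n) - q ^ (p ^ (n + 1)) =
                    q ^ (p ^ n) * ((1 : K) ^ (p - 1) - (q ^ (p ^ n)) ^ (p - 1)) := by
                  rw [one_pow, mul_sub, mul_one, ← pow_succ',
                    show p - 1 + 1 = p from by have := hp.out.two_le; omega,
                    ← pow_mul, ← pow_succ]
                rw [hid, norm_mul, hQn, one_mul]
                calc ‖(1 : K) ^ (p - 1) - (q ^ (p ^ n)) ^ (p - 1)‖ ≤ ‖(1 : K) - q ^ (p ^ n)‖ :=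
                      na_pow_sub_pow hna (by simp) hQn.le _
                  _ = ((p : ℝ) ^ n)⁻¹ * ‖1 - q‖ := vQ
        -- assemble
        simp only [norm_mul, norm_inv]
        rw [v1, v2, v3, vQ, vR]
        have hps : ((p : ℝ) ^ (l.factorization p)) ≤
            (p : ℝ) + ∑ l' ∈ range d, (‖((l' : ℕ) : K)‖)⁻¹ := by
          have heq : ((p : ℝ) ^ (l.factorization p)) = (‖((l : ℕ) : K)‖)⁻¹ := by
            rw [norm_natCast_eq_factorization hna hpK hlne, inv_inv]
          rw [heq]
          have hle : (‖((l : ℕ) : K)‖)⁻¹ ≤ ∑ l' ∈ range d, (‖((l' : ℕ) : K)‖)⁻¹ :=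
            Finset.single_le_sum (f := fun l' : ℕ => (‖((l' : ℕ) : K)‖)⁻¹)
              (fun i _ => by positivity) (Finset.mem_range.mpr hld)
          linarith
        have hfpos : (0 : ℝ) < ((p : ℝ) ^ (l.factorization p)) := by positivity
        calc ((p : ℝ) ^ (l.factorization p))⁻¹ * (((p : ℝ) ^ (m + n + 1))⁻¹ * ‖1 - q‖) *
              (((p : ℝ) ^ n)⁻¹ * ‖1 - q‖ * (((p : ℝ) ^ (n + 1))⁻¹ * ‖1 - q‖) *
                ‖(∑ k ∈ range l, (q ^ (p ^ n)) ^ k) - (∑ k ∈ range l, (q ^ (p ^ (n + 1))) ^ k)‖) *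
              (‖1 - q‖⁻¹ * (((p : ℝ) ^ (l.factorization p))⁻¹ * (((p : ℝ) ^ n)⁻¹ * ‖1 - q‖))⁻¹ *
                (((p : ℝ) ^ (l.factorization p))⁻¹ * (((p : ℝ) ^ (n + 1))⁻¹ * ‖1 - q‖))⁻¹)
            ≤ ((p : ℝ) ^ (l.factorization p))⁻¹ * (((p : ℝ) ^ (m + n + 1))⁻¹ * ‖1 - q‖) *
              (((p : ℝ) ^ n)⁻¹ * ‖1 - q‖ * (((p : ℝ) ^ (n + 1))⁻¹ * ‖1 - q‖) *
                (((p : ℝ) ^ n)⁻¹ * ‖1 - q‖)) *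
              (‖1 - q‖⁻¹ * (((p : ℝ) ^ (l.factorization p))⁻¹ * (((p : ℝ) ^ n)⁻¹ * ‖1 - q‖))⁻¹ *
                (((p : ℝ) ^ (l.factorization p))⁻¹ * (((p : ℝ) ^ (n + 1))⁻¹ * ‖1 - q‖))⁻¹) := by
              gcongr
          _ = ((p : ℝ) ^ (m + n + 1))⁻¹ * (((p : ℝ) ^ n)⁻¹ * ‖1 - q‖) *
              ((p : ℝ) ^ (l.factorization p)) := by
              field_simp
          _ ≤ ((p : ℝ) ^ (m + n + 1))⁻¹ * (((p : ℝ) ^ n)⁻¹ * ‖1 - q‖) *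
              ((p : ℝ) + ∑ l' ∈ range d, (‖((l' : ℕ) : K)‖)⁻¹) := by
              exact mul_le_mul_of_nonneg_left hps (by positivity)
    -- now assemble the sum over j and l
    have hswap1 : (∑ i ∈ range (p ^ (m + 1)), ∑ j ∈ range d, c j * qNum q (a + i * p ^ n) ^ j)
        = ∑ j ∈ range d, c j * ∑ i ∈ range (p ^ (m + 1)), qNum q (a + i * p ^ n) ^ j := by
      rw [Finset.sum_comm]
      exact Finset.sum_congr rfl fun j _ => (Finset.mul_sum _ _ _).symm
    have hswap2 : (∑ i ∈ range (p ^ m), ∑ j ∈ range d, c j * qNum q (a + i * p ^ (n + 1)) ^ j)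
        = ∑ j ∈ range d, c j * ∑ i ∈ range (p ^ m), qNum q (a + i * p ^ (n + 1)) ^ j := by
      rw [Finset.sum_comm]
      exact Finset.sum_congr rfl fun j _ => (Finset.mul_sum _ _ _).symm
    rw [hswap1, hswap2, Finset.mul_sum, Finset.mul_sum, ← Finset.sum_sub_distrib]
    have hjb : ∀ j ∈ range d,
        ‖qNum q (p ^ n) * (c j * ∑ i ∈ range (p ^ (m + 1)), qNum q (a + i * p ^ n) ^ j)
          - qNum q (p ^ (n + 1)) * (c j * ∑ i ∈ range (p ^ m), qNum q (a + i * p ^ (n + 1)) ^ j)‖ ≤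
        (∑ j' ∈ range d, ‖c j'‖ * ‖1 - q‖⁻¹ ^ j') *
          (((p : ℝ) ^ (m + n + 1))⁻¹ * (((p : ℝ) ^ n)⁻¹ * ‖1 - q‖) *
            ((p : ℝ) + ∑ l' ∈ range d, (‖((l' : ℕ) : K)‖)⁻¹)) := by
      intro j hj
      rw [hfact, norm_mul]
      have hT1 : (∑ i ∈ range (p ^ (m + 1)), qNum q (a + i * p ^ n) ^ j)
          = ((1 - q)⁻¹) ^ j * ∑ l ∈ range (j + 1), ((-(q ^ a)) ^ l * ((j.choose l : ℕ) : K) *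
              ∑ i ∈ range (p ^ (m + 1)), (q ^ (p ^ n * l)) ^ i) := by
        calc (∑ i ∈ range (p ^ (m + 1)), qNum q (a + i * p ^ n) ^ j)
            = ∑ i ∈ range (p ^ (m + 1)), (((1 - q)⁻¹) ^ j *
                ∑ l ∈ range (j + 1), ((-(q ^ a)) ^ l * ((j.choose l : ℕ) : K) *
                  (q ^ (p ^ n * l)) ^ i)) :=
              Finset.sum_congr rfl fun i _ => qNum_pow_expand q a (p ^ n) i j
          _ = ((1 - q)⁻¹) ^ j * ∑ i ∈ range (p ^ (m + 1)), ∑ l ∈ range (j + 1),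
                ((-(q ^ a)) ^ l * ((j.choose l : ℕ) : K) * (q ^ (p ^ n * l)) ^ i) := by
              rw [Finset.mul_sum]
          _ = _ := by
              rw [Finset.sum_comm]
              congr 1
              exact Finset.sum_congr rfl fun l _ => (Finset.mul_sum _ _ _).symm
      have hT2 : (∑ i ∈ range (p ^ m), qNum q (a + i * p ^ (n + 1)) ^ j)
          = ((1 - q)⁻¹) ^ j * ∑ l ∈ range (j + 1), ((-(q ^ a)) ^ l * ((j.choose l : ℕ) : K) *
              ∑ i ∈ range (p ^ m), (q ^ (p ^ (n + 1) * l)) ^ i) := by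
        calc (∑ i ∈ range (p ^ m), qNum q (a + i * p ^ (n + 1)) ^ j)
            = ∑ i ∈ range (p ^ m), (((1 - q)⁻¹) ^ j *
                ∑ l ∈ range (j + 1), ((-(q ^ a)) ^ l * ((j.choose l : ℕ) : K) *
                  (q ^ (p ^ (n + 1) * l)) ^ i)) :=
              Finset.sum_congr rfl fun i _ => qNum_pow_expand q a (p ^ (n + 1)) i j
          _ = ((1 - q)⁻¹) ^ j * ∑ i ∈ range (p ^ m), ∑ l ∈ range (j + 1),
                ((-(q ^ a)) ^ l * ((j.choose l : ℕ) : K) * (q ^ (p ^ (n + 1) * l)) ^ i) := by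
              rw [Finset.mul_sum]
          _ = _ := by
              rw [Finset.sum_comm]
              congr 1
              exact Finset.sum_congr rfl fun l _ => (Finset.mul_sum _ _ _).symm
      have hMj : ‖qNum q (p ^ n) * (∑ i ∈ range (p ^ (m + 1)), qNum q (a + i * p ^ n) ^ j)
          - qNum q (p ^ (n + 1)) * (∑ i ∈ range (p ^ m), qNum q (a + i * p ^ (n + 1)) ^ j)‖ ≤
          ‖1 - q‖⁻¹ ^ j * (((p : ℝ) ^ (m + n + 1))⁻¹ * (((p : ℝ) ^ n)⁻¹ * ‖1 - q‖) *
            ((p : ℝ) + ∑ l' ∈ range d, (‖((l' : ℕ) : K)‖)⁻¹)) := by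
        rw [hT1, hT2, hfact, norm_mul, norm_pow, norm_inv]
        refine mul_le_mul_of_nonneg_left ?_ (by positivity)
        rw [Finset.mul_sum, Finset.mul_sum, ← Finset.sum_sub_distrib]
        refine na_sum_le hna (by positivity) fun l hl => ?_
        rw [hfact, norm_mul]
        have hA : ‖(-(q ^ a)) ^ l * ((j.choose l : ℕ) : K)‖ ≤ 1 := by
          rw [norm_mul, norm_pow, norm_neg, norm_pow, hqn1, one_pow, one_pow, one_mul]
          exact na_natCast_le_one hna _
        have hld : l < d := by
          have hl1 := Finset.mem_range.mp hl
          have hj1 := Finset.mem_range.mp hj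
          omega
        exact le_trans (mul_le_mul hA (hBl l hld) (norm_nonneg _) zero_le_one)
          (le_of_eq (one_mul _))
      calc ‖c j‖ * ‖qNum q (p ^ n) * (∑ i ∈ range (p ^ (m + 1)), qNum q (a + i * p ^ n) ^ j)
            - qNum q (p ^ (n + 1)) * (∑ i ∈ range (p ^ m), qNum q (a + i * p ^ (n + 1)) ^ j)‖
          ≤ ‖c j‖ * (‖1 - q‖⁻¹ ^ j * (((p : ℝ) ^ (m + n + 1))⁻¹ * (((p : ℝ) ^ n)⁻¹ * ‖1 - q‖) *
              ((p : ℝ) + ∑ l' ∈ range d, (‖((l' : ℕ) : K)‖)⁻¹))) :=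
            mul_le_mul_of_nonneg_left hMj (norm_nonneg _)
        _ = (‖c j‖ * ‖1 - q‖⁻¹ ^ j) * (((p : ℝ) ^ (m + n + 1))⁻¹ * (((p : ℝ) ^ n)⁻¹ * ‖1 - q‖) *
              ((p : ℝ) + ∑ l' ∈ range d, (‖((l' : ℕ) : K)‖)⁻¹)) := by ring
        _ ≤ (∑ j' ∈ range d, ‖c j'‖ * ‖1 - q‖⁻¹ ^ j') *
              (((p : ℝ) ^ (m + n + 1))⁻¹ * (((p : ℝ) ^ n)⁻¹ * ‖1 - q‖) *
                ((p : ℝ) + ∑ l' ∈ range d, (‖((l' : ℕ) : K)‖)⁻¹)) := by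
            refine mul_le_mul_of_nonneg_right ?_ (by positivity)
            exact Finset.single_le_sum (f := fun j' : ℕ => ‖c j'‖ * ‖1 - q‖⁻¹ ^ j')
              (fun i _ => by positivity) hj
    have hsum := na_sum_le hna (by positivity) hjb
    calc (p : ℝ) ^ (m + n + 1) *
          ‖∑ j ∈ range d, (qNum q (p ^ n) * (c j * ∑ i ∈ range (p ^ (m + 1)),
              qNum q (a + i * p ^ n) ^ j)
            - qNum q (p ^ (n + 1)) * (c j * ∑ i ∈ range (p ^ m),
              qNum q (a + i * p ^ (n + 1)) ^ j))‖
        ≤ (p : ℝ) ^ (m + n + 1) * ((∑ j' ∈ range d, ‖c j'‖ * ‖1 - q‖⁻¹ ^ j') *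
            (((p : ℝ) ^ (m + n + 1))⁻¹ * (((p : ℝ) ^ n)⁻¹ * ‖1 - q‖) *
              ((p : ℝ) + ∑ l' ∈ range d, (‖((l' : ℕ) : K)‖)⁻¹))) :=
          mul_le_mul_of_nonneg_left hsum (by positivity)
      _ = (∑ j ∈ range d, ‖c j‖ * ‖1 - q‖⁻¹ ^ j) * ‖1 - q‖ *
            ((p : ℝ) + ∑ l ∈ range d, (‖((l : ℕ) : K)‖)⁻¹) * ((p : ℝ) ^ n)⁻¹ := by
          have hMne : ((p : ℝ) ^ (m + n + 1)) ≠ 0 := by positivity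
          rw [show ∀ A B C D : ℝ, A * (B * (A⁻¹ * C * D)) = (A * A⁻¹) * (B * (C * D)) from
            by intros; ring, mul_inv_cancel₀ hMne, one_mul]
          ring

  have hlim := le_of_tendsto hD.norm (Filter.Eventually.of_forall key)
  have hzp : (p : ℝ) ^ (-(n : ℤ)) = ((p : ℝ) ^ n)⁻¹ := by
    rw [zpow_neg, zpow_natCast]
  rw [hzp]
  refine hlim.trans ?_
  have hpn : (0:ℝ) ≤ ((p : ℝ) ^ n)⁻¹ := by positivity
  nlinarith [mul_nonneg (mul_nonneg hγnn hεpos.le) (by positivity :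
    (0:ℝ) ≤ (p : ℝ) + ∑ l ∈ range d, (‖((l : ℕ) : K)‖)⁻¹)]
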